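/- arXiv:1306.5030 — 2 statements merged into one kernel-verified Lean document; each statement's English description precedes it below -/
import Mathlib

section
/- Each polynomial v^k_{(l,m−l)} = (e₋)^k(z₁^l z₂^{m−l}) is harmonic: Δ v^k_{(l,m−l)} = 0, where Δ = ∂²/∂z₁∂z̄₁ + ∂²/∂z₂∂z̄₂. -/
open MvPolynomial

/- Variables: index 0 ↦ z₁, 1 ↦ z₂, 2 ↦ z̄₁, 3 ↦ z̄₂ in `ℂ[z₁, z₂, z̄₁, z̄₂]`. -/

/-- `e₋ = -z̄₂ ∂/∂z₁ + z̄₁ ∂/∂z₂`. -/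
noncomputable def eMinus : Derivation ℂ (MvPolynomial (Fin 4) ℂ) (MvPolynomial (Fin 4) ℂ) :=
  mkDerivation ℂ ![-(X 3), X 2, 0, 0]

/-- `v^k_{(l, m-l)} = (e₋)^k (z₁^l z₂^(m-l))`. -/
noncomputable def v (m l k : ℕ) : MvPolynomial (Fin 4) ℂ :=
  (fun p => eMinus p)^[k] (X 0 ^ l * X 1 ^ (m - l))

/-- The Laplacian `Δ = ∂²/∂z₁∂z̄₁ + ∂²/∂z₂∂z̄₂`. -/
noncomputable def lap (p : MvPolynomial (Fin 4) ℂ) : MvPolynomial (Fin 4) ℂ :=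
  pderiv 0 (pderiv 2 p) + pderiv 1 (pderiv 3 p)

/-- Partial derivatives commute. -/
lemma my_pderiv_comm (i j : Fin 4) (p : MvPolynomial (Fin 4) ℂ) :
    pderiv i (pderiv j p) = pderiv j (pderiv i p) := by
  induction p using MvPolynomial.induction_on with
  | C => simp
  | add p q hp hq => simp [hp, hq]
  | mul_X p k hp =>
    simp only [pderiv_mul, map_add, pderiv_mul, hp]
    rcases eq_or_ne k i with rfl | hi <;> rcases eq_or_ne k j with rfl | hj <;>
      simp [pderiv_X_self, pderiv_X_of_ne, *]

/-- Explicit formula for `e₋`. -/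
lemma eMinus_apply (p : MvPolynomial (Fin 4) ℂ) :
    eMinus p = -(X 3) * pderiv 0 p + X 2 * pderiv 1 p := by
  have : eMinus = (-(X 3) : MvPolynomial (Fin 4) ℂ) • (pderiv 0)
      + (X 2 : MvPolynomial (Fin 4) ℂ) • (pderiv 1) := by
    apply derivation_ext
    intro i
    fin_cases i <;>
      simp (config := { decide := true }) [eMinus, mkDerivation_X, pderiv_X, Pi.single_apply]
  rw [this]; simp [smul_eq_mul]

/-- The Laplacian commutes with `e₋`. -/
lemma lap_eMinus (p : MvPolynomial (Fin 4) ℂ) : lap (eMinus p) = eMinus (lap p) := by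
  simp only [lap, eMinus_apply, pderiv_mul, map_add, map_mul, map_neg,
    pderiv_X_self, pderiv_X_of_ne (by decide : (3:Fin 4) ≠ 2),
    pderiv_X_of_ne (by decide : (3:Fin 4) ≠ 0), pderiv_X_of_ne (by decide : (3:Fin 4) ≠ 1),
    pderiv_X_of_ne (by decide : (2:Fin 4) ≠ 0), pderiv_X_of_ne (by decide : (2:Fin 4) ≠ 1),
    pderiv_X_of_ne (by decide : (2:Fin 4) ≠ 3), pderiv_one, map_zero, neg_zero, zero_mul,
    mul_zero, one_mul, neg_mul, add_zero, zero_add]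
  rw [my_pderiv_comm 2 0 p, my_pderiv_comm 2 1 p, my_pderiv_comm 3 0 p, my_pderiv_comm 3 1 p,
    my_pderiv_comm 0 1 (pderiv 2 p), my_pderiv_comm 1 0 (pderiv 3 p), my_pderiv_comm 0 1 p]
  ring

/-- Each polynomial `v^k_{(l,m-l)} = (e₋)^k (z₁^l z₂^(m-l))` is harmonic: `Δ v^k = 0`. -/
theorem v_harmonic (m l k : ℕ) (h : l ≤ m) : lap (v m l k) = 0 := by
  induction k with
  | zero =>
    simp [v, lap, pderiv_mul, pderiv_pow, pderiv_X_of_ne (by decide : (0:Fin 4) ≠ 2),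
      pderiv_X_of_ne (by decide : (1:Fin 4) ≠ 2), pderiv_X_of_ne (by decide : (0:Fin 4) ≠ 3),
      pderiv_X_of_ne (by decide : (1:Fin 4) ≠ 3)]
  | succ k ih =>
    have hs : v m l (k+1) = eMinus (v m l k) := by
      simp [v, Function.iterate_succ_apply']
    rw [hs, lap_eMinus, ih, map_zero]
end

section
/- Let A be an associative algebra with a trace τ, a derivation Θ with τ∘Θ = 0 giving the 2-cocycle c(x,y) = τ(Θ(x)y), and g a Lie algebra with an invariant symmetric bilinear form (·|·) on U(g) satisfying (XY|Z) = (YZ|X). Then the bracket on (A ⊗ U(g)) ⊕ C·a defined by [x⊗X, y⊗Y] = (xy)⊗(XY) − (yx)⊗(YX) + (X|Y)c(x,y)·a, with a central, satisfies the Jacobi identity, giving a one-dimensional central extension of the Lie algebra A ⊗ U(g). -/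
open scoped TensorProduct

section Aux
variable {A : Type*} [Ring A] [Algebra ℂ A]
    {L : Type*} [LieRing L] [LieAlgebra ℂ L]

theorem tau_cyc (τ : A →ₗ[ℂ] ℂ) (hτ : ∀ x y : A, τ (x * y) = τ (y * x))
    (Θ : A →ₗ[ℂ] A) (hΘ : ∀ x y : A, Θ (x * y) = Θ x * y + x * Θ y)
    (hτΘ : ∀ x : A, τ (Θ x) = 0) (x y z : A) :
    τ (Θ x * (y * z)) + τ (Θ y * (z * x)) + τ (Θ z * (x * y)) = 0 := by
  have h := hτΘ (x * (y * z))
  rw [hΘ, hΘ, map_add, mul_add, map_add] at h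
  have h1 : τ (x * (Θ y * z)) = τ (Θ y * (z * x)) := by
    rw [hτ, mul_assoc]
  have h2 : τ (x * (y * Θ z)) = τ (Θ z * (x * y)) := by
    rw [hτ (Θ z), mul_assoc]
  linear_combination h - h1 - h2

theorem cocycle_jacobi (τ : A →ₗ[ℂ] ℂ) (hτ : ∀ x y : A, τ (x * y) = τ (y * x))
    (Θ : A →ₗ[ℂ] A) (hΘ : ∀ x y : A, Θ (x * y) = Θ x * y + x * Θ y)
    (hτΘ : ∀ x : A, τ (Θ x) = 0)
    (K : UniversalEnvelopingAlgebra ℂ L →ₗ[ℂ] UniversalEnvelopingAlgebra ℂ L →ₗ[ℂ] ℂ)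
    (hKsymm : ∀ X Y, K X Y = K Y X)
    (hKcyc : ∀ X Y Z, K (X * Y) Z = K (Y * Z) X)
    (C : (A ⊗[ℂ] UniversalEnvelopingAlgebra ℂ L) →ₗ[ℂ]
         (A ⊗[ℂ] UniversalEnvelopingAlgebra ℂ L) →ₗ[ℂ] ℂ)
    (hC : ∀ (x y : A) (X Y : UniversalEnvelopingAlgebra ℂ L),
        C (x ⊗ₜ[ℂ] X) (y ⊗ₜ[ℂ] Y) = τ (Θ x * y) * K X Y)
    (u v w : A ⊗[ℂ] UniversalEnvelopingAlgebra ℂ L) :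
    C u (v * w - w * v) + C v (w * u - u * w) + C w (u * v - v * u) = 0 := by
  induction u using TensorProduct.induction_on with
  | zero => simp
  | add u₁ u₂ ih1 ih2 =>
    simp only [mul_add, add_mul, map_add, LinearMap.add_apply, map_sub,
      LinearMap.sub_apply] at ih1 ih2 ⊢
    linear_combination ih1 + ih2
  | tmul x X =>
    induction v using TensorProduct.induction_on with
    | zero => simp
    | add v₁ v₂ ih1 ih2 =>
      simp only [mul_add, add_mul, map_add, LinearMap.add_apply, map_sub,
        LinearMap.sub_apply] at ih1 ih2 ⊢
      linear_combination ih1 + ih2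
    | tmul y Y =>
      induction w using TensorProduct.induction_on with
      | zero => simp
      | add w₁ w₂ ih1 ih2 =>
        simp only [mul_add, add_mul, map_add, LinearMap.add_apply, map_sub,
          LinearMap.sub_apply] at ih1 ih2 ⊢
        linear_combination ih1 + ih2
      | tmul z Z =>
        simp only [Algebra.TensorProduct.tmul_mul_tmul, map_sub, LinearMap.sub_apply, hC]
        have ha1 : K X (Y * Z) = K (Y * Z) X := hKsymm _ _
        have ha2 : K Y (Z * X) = K (Y * Z) X := by
          rw [hKsymm, hKcyc Y Z X]
        have ha3 : K Z (X * Y) = K (Y * Z) X := by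
          rw [hKsymm, ← hKcyc Z X Y, hKsymm, ha2]
        have hb1 : K X (Z * Y) = K (Z * Y) X := hKsymm _ _
        have hb2 : K Y (X * Z) = K (Z * Y) X := by
          rw [hKsymm, hKcyc X Z Y]
        have hb3 : K Z (Y * X) = K (Z * Y) X := by
          rw [hKsymm, hKcyc Y X Z, hKcyc X Z Y]
        rw [ha1, ha2, ha3, hb1, hb2, hb3]
        linear_combination (K (Y * Z) X) * tau_cyc τ hτ Θ hΘ hτΘ x y z
          - (K (Z * Y) X) * tau_cyc τ hτ Θ hΘ hτΘ x z y

end Aux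

/-- Central extension of `A ⊗ U(𝔤)` by the 2-cocycle `c(x,y) = τ(Θ(x) y)` paired with
an invariant symmetric bilinear form `K` on `U(𝔤)` with `K(XY, Z) = K(YZ, X)`:
the bracket `[x⊗X, y⊗Y] = (xy)⊗(XY) - (yx)⊗(YX) + K(X,Y) c(x,y) · a` with `a` central
satisfies the Jacobi identity. Here `C` is the bilinear extension of
`(x⊗X, y⊗Y) ↦ c(x,y) K(X,Y)` to the tensor product, and the extension is realized on
`(A ⊗ U(𝔤)) × ℂ` with `a = (0, 1)`. -/
theorem central_extension_jacobi (A : Type*) [Ring A] [Algebra ℂ A]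
    (L : Type*) [LieRing L] [LieAlgebra ℂ L]
    (τ : A →ₗ[ℂ] ℂ) (hτ : ∀ x y : A, τ (x * y) = τ (y * x))
    (Θ : A →ₗ[ℂ] A) (hΘ : ∀ x y : A, Θ (x * y) = Θ x * y + x * Θ y)
    (hτΘ : ∀ x : A, τ (Θ x) = 0)
    (K : UniversalEnvelopingAlgebra ℂ L →ₗ[ℂ] UniversalEnvelopingAlgebra ℂ L →ₗ[ℂ] ℂ)
    (hKsymm : ∀ X Y, K X Y = K Y X)
    (hKcyc : ∀ X Y Z, K (X * Y) Z = K (Y * Z) X)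
    (C : (A ⊗[ℂ] UniversalEnvelopingAlgebra ℂ L) →ₗ[ℂ]
         (A ⊗[ℂ] UniversalEnvelopingAlgebra ℂ L) →ₗ[ℂ] ℂ)
    (hC : ∀ (x y : A) (X Y : UniversalEnvelopingAlgebra ℂ L),
        C (x ⊗ₜ[ℂ] X) (y ⊗ₜ[ℂ] Y) = τ (Θ x * y) * K X Y) :
    let br : (A ⊗[ℂ] UniversalEnvelopingAlgebra ℂ L) × ℂ →
             (A ⊗[ℂ] UniversalEnvelopingAlgebra ℂ L) × ℂ →
             (A ⊗[ℂ] UniversalEnvelopingAlgebra ℂ L) × ℂ :=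
      fun u w => (u.1 * w.1 - w.1 * u.1, C u.1 w.1)
    (∀ (x y : A) (X Y : UniversalEnvelopingAlgebra ℂ L),
        br (x ⊗ₜ[ℂ] X, 0) (y ⊗ₜ[ℂ] Y, 0)
          = ((x * y) ⊗ₜ[ℂ] (X * Y) - (y * x) ⊗ₜ[ℂ] (Y * X),
             K X Y * τ (Θ x * y))) ∧
    (∀ u, br (0, 1) u = 0 ∧ br u (0, 1) = 0) ∧
    (∀ u v w, br u (br v w) + br v (br w u) + br w (br u v) = 0) := by
  intro br
  refine ⟨?_, ?_, ?_⟩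
  · intro x y X Y
    simp only [br, Algebra.TensorProduct.tmul_mul_tmul, hC]
    exact Prod.ext rfl (mul_comm _ _)
  · intro u
    constructor <;> simp [br, Prod.ext_iff]
  · intro u v w
    have hcoc := cocycle_jacobi τ hτ Θ hΘ hτΘ K hKsymm hKcyc C hC u.1 v.1 w.1
    refine Prod.ext ?_ ?_
    · simp only [br, Prod.fst_add]
      noncomm_ring
    · simp only [br, Prod.snd_add, Prod.snd_zero]
      linear_combination hcoc
end
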